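/- Let H be an additive subgroup of ℂⁿ whose ℂ-linear span is all of ℂⁿ. Let f : ℂⁿ → ℂ be an entire function such that for every ε > 0 there exists a constant c(ε) > 0 with |f(z)| ≤ c(ε)·exp(ε·‖z‖) for all z ∈ ℂⁿ, and suppose f(z + h) = f(z) for all z ∈ ℂⁿ and all h ∈ H. Then f is constant. -/

import Mathlib

/-!
Say `f` has exponential type `τ` if `‖f z‖ ≤ C exp (τ ‖z‖)`. If `v` is a period of such an `f` with
`τ ‖v‖ < 2π`, then for each `z` the function `t ↦ f (z + t • v)` is `1`-periodic of type `< 2π`,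
so it factors as `F (exp (2πit))` with `F` holomorphic on `ℂˣ` and
`‖F q‖ ≤ C' max (‖q‖, ‖q‖⁻¹) ^ a` for some `a < 1`. Riemann's removable singularity theorem
extends `F` across `0`, and Cauchy's estimate forces an entire function of sublinear growth to be
constant; hence every `c • v` is a period. As `f` has arbitrarily small type, its periods form a
`ℂ`-subspace, which contains `H` and is therefore everything.
-/

open Complex Filter Asymptotics Function Metric Bornology
open scoped Real Topology

theorem Differentiable.apply_eq_apply_of_isLittleO_cobounded {F : Type*} [NormedAddCommGroup F]
    [NormedSpace ℂ F] {f : ℂ → F} (hf : Differentiable ℂ f) (ho : f =o[cobounded ℂ] id)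
    (z w : ℂ) : f z = f w := by
  refine is_const_of_deriv_eq_zero hf (fun c => ?_) z w
  refine norm_le_zero_iff.1 (le_of_forall_pos_le_add fun ε hε => ?_)
  have hfar := ho.def (half_pos hε)
  rw [← comap_norm_atTop, eventually_comap, eventually_atTop] at hfar
  obtain ⟨R₀, hR₀⟩ := hfar
  set R := max R₀ 0 + ‖c‖ + 1
  have hR : 0 < R := by positivity
  have hsphere : ∀ x ∈ sphere c R, ‖f x‖ ≤ ε / 2 * (R + ‖c‖) := by
    intro x hx
    rw [mem_sphere_iff_norm] at hx
    have hlow : R - ‖c‖ ≤ ‖x‖ := by linarith [norm_sub_le x c]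
    have hup : ‖x‖ ≤ R + ‖c‖ := by linarith [norm_sub_norm_le x c]
    calc ‖f x‖ ≤ ε / 2 * ‖x‖ := hR₀ _ (by linarith [le_max_left R₀ 0]) x rfl
      _ ≤ ε / 2 * (R + ‖c‖) := by gcongr
  calc ‖_root_.deriv f c‖ ≤ ε / 2 * (R + ‖c‖) / R :=
        norm_deriv_le_of_forall_mem_sphere_norm_le hR hf.diffContOnCl hsphere
    _ ≤ 0 + ε := by
        rw [div_le_iff₀ hR]
        nlinarith [le_max_right R₀ 0]

theorem Real.isLittleO_exp_mul_abs_exp_abs {α : Type*} {l : Filter α} {u : α → ℝ} {a : ℝ}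
    (ha : a < 1) (hu : Tendsto (fun x => |u x|) l atTop) :
    (fun x => Real.exp (a * |u x|)) =o[l] fun x => Real.exp |u x| :=
  Real.isLittleO_exp_comp_exp_comp.2 <|
    (hu.const_mul_atTop (sub_pos.2 ha)).congr fun x => by ring

namespace Complex

theorem norm_log_le (z : ℂ) : ‖log z‖ ≤ |Real.log ‖z‖| + π :=
  calc ‖log z‖ ≤ |(log z).re| + |(log z).im| := norm_le_abs_re_add_abs_im _
    _ ≤ |Real.log ‖z‖| + π := by
        rw [log_re, log_im]
        gcongr
        exact abs_arg_le_pi z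

theorem isLittleO_exp_mul_abs_log_norm_nhdsNE_zero {a : ℝ} (ha : a < 1) :
    (fun q : ℂ => Real.exp (a * |Real.log ‖q‖|)) =o[𝓝[≠] 0] fun q => q⁻¹ := by
  have hlog : Tendsto (fun q : ℂ => Real.log ‖q‖) (𝓝[≠] 0) atBot :=
    Real.tendsto_log_nhdsGT_zero.comp tendsto_norm_nhdsNE_zero
  refine IsLittleO.of_norm_right <|
    (Real.isLittleO_exp_mul_abs_exp_abs ha (tendsto_abs_atBot_atTop.comp hlog)).congr'
      EventuallyEq.rfl ?_
  filter_upwards [self_mem_nhdsWithin, nhdsWithin_le_nhds (closedBall_mem_nhds 0 one_pos)]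
    with q hq hq1
  have hpos : 0 < ‖q‖ := norm_pos_iff.2 hq
  rw [mem_closedBall_zero_iff] at hq1
  rw [abs_of_nonpos (Real.log_nonpos hpos.le hq1), Real.exp_neg, Real.exp_log hpos, norm_inv]

theorem isLittleO_exp_mul_abs_log_norm_cobounded {a : ℝ} (ha : a < 1) :
    (fun q : ℂ => Real.exp (a * |Real.log ‖q‖|)) =o[cobounded ℂ] id := by
  have hlog : Tendsto (fun q : ℂ => Real.log ‖q‖) (cobounded ℂ) atTop :=
    Real.tendsto_log_atTop.comp tendsto_norm_cobounded_atTop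
  refine IsLittleO.of_norm_right <|
    (Real.isLittleO_exp_mul_abs_exp_abs ha (tendsto_abs_atTop_atTop.comp hlog)).congr'
      EventuallyEq.rfl ?_
  filter_upwards [eventually_cobounded_le_norm 1] with q hq1
  rw [abs_of_nonneg (Real.log_nonneg hq1), Real.exp_log (by linarith), id]

end Complex

namespace Function.Periodic

section OneVariable

variable {g : ℂ → ℂ} {h τ C : ℝ}

theorem norm_invQParam_le (hh : 0 ≤ h) (q : ℂ) :
    ‖invQParam h q‖ ≤ h / (2 * π) * (|Real.log ‖q‖| + π) :=
  calc ‖invQParam h q‖ = h / (2 * π) * ‖log q‖ := by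
        simp only [invQParam, norm_mul, norm_div, norm_real, Real.norm_eq_abs, abs_of_nonneg hh,
          norm_ofNat, abs_of_pos Real.pi_pos, norm_I, mul_one]
    _ ≤ h / (2 * π) * (|Real.log ‖q‖| + π) := by
        gcongr
        exact norm_log_le q

theorem isBigO_comp_invQParam (hh : 0 ≤ h) (hτ : 0 ≤ τ)
    (hbound : ∀ t, ‖g t‖ ≤ C * Real.exp (τ * ‖t‖)) (l : Filter ℂ) :
    (g ∘ invQParam h) =O[l] fun q => Real.exp (τ * h / (2 * π) * |Real.log ‖q‖|) := by
  have hC : 0 ≤ C := by simpa using (norm_nonneg _).trans (hbound 0)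
  refine IsBigO.of_bound (C * Real.exp (τ * h / 2)) (Eventually.of_forall fun q => ?_)
  rw [Real.norm_of_nonneg (Real.exp_pos _).le, mul_assoc, ← Real.exp_add]
  refine (hbound _).trans (mul_le_mul_of_nonneg_left (Real.exp_le_exp.2 ?_) hC)
  calc τ * ‖invQParam h q‖ ≤ τ * (h / (2 * π) * (|Real.log ‖q‖| + π)) := by
        gcongr
        exact norm_invQParam_le hh q
    _ = τ * h / 2 + τ * h / (2 * π) * |Real.log ‖q‖| := by
        field_simp
        ring

theorem differentiableOn_comp_invQParam (hh : h ≠ 0) (hper : Periodic g h)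
    (hg : Differentiable ℂ g) : DifferentiableOn ℂ (g ∘ invQParam h) {0}ᶜ := fun _ hq =>
  (qParam_right_inv hh hq ▸ differentiableAt_cuspFunction hh hper (hg _))
    |>.differentiableWithinAt.congr (fun _ hx => (cuspFunction_eq_of_nonzero h g hx).symm)
      (cuspFunction_eq_of_nonzero h g hq).symm

theorem differentiable_cuspFunction_of_norm_le_exp (hh : 0 < h) (hper : Periodic g h)
    (hg : Differentiable ℂ g) (hτ₀ : 0 ≤ τ) (hτ : τ * h < 2 * π)
    (hbound : ∀ t, ‖g t‖ ≤ C * Real.exp (τ * ‖t‖)) :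
    Differentiable ℂ (cuspFunction h g) := by
  have hsing : (fun q => (g ∘ invQParam h) q - (g ∘ invQParam h) 0) =o[𝓝[≠] 0]
      fun q => (q - 0)⁻¹ := by
    simp only [sub_zero]
    refine ((isBigO_comp_invQParam hh.le hτ₀ hbound _).trans_isLittleO
      (isLittleO_exp_mul_abs_log_norm_nhdsNE_zero ((div_lt_one (by positivity)).2 hτ))).sub ?_
    exact isLittleO_const_left.2 <|
      .inr (tendsto_norm_cobounded_atTop.comp tendsto_inv₀_nhdsNE_zero)
  rw [← differentiableOn_univ]
  refine differentiableOn_update_limUnder_of_isLittleO univ_mem ?_ hsing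
  simpa [← Set.compl_eq_univ_sdiff] using differentiableOn_comp_invQParam hh.ne' hper hg

theorem eq_const_of_norm_le_exp (hh : 0 < h) (hper : Periodic g h)
    (hg : Differentiable ℂ g) (hτ₀ : 0 ≤ τ) (hτ : τ * h < 2 * π)
    (hbound : ∀ t, ‖g t‖ ≤ C * Real.exp (τ * ‖t‖)) (t : ℂ) : g t = g 0 := by
  have hinf : cuspFunction h g =o[cobounded ℂ] id := by
    refine ((isBigO_comp_invQParam hh.le hτ₀ hbound _).trans_isLittleO
      (isLittleO_exp_mul_abs_log_norm_cobounded ((div_lt_one (by positivity)).2 hτ))).congr'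
        ?_ EventuallyEq.rfl
    filter_upwards [eventually_ne_cobounded 0] with q hq
    exact (cuspFunction_eq_of_nonzero h g hq).symm
  rw [← eq_cuspFunction hh.ne' hper t, ← eq_cuspFunction hh.ne' hper 0]
  exact (differentiable_cuspFunction_of_norm_le_exp hh hper hg hτ₀ hτ hbound)
    |>.apply_eq_apply_of_isLittleO_cobounded hinf _ _

end OneVariable

variable {E : Type*} [NormedAddCommGroup E] [NormedSpace ℂ E] {f : E → ℂ}

theorem smul_of_norm_le_exp (hf : Differentiable ℂ f) {τ C : ℝ} (hτ₀ : 0 ≤ τ)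
    (hbound : ∀ z, ‖f z‖ ≤ C * Real.exp (τ * ‖z‖)) {v : E} (hv : Periodic f v)
    (hτv : τ * ‖v‖ < 2 * π) (c : ℂ) : Periodic f (c • v) := by
  intro z
  have hline : Periodic (fun t : ℂ => f (z + t • v)) 1 := fun t => by
    simpa only [add_smul, one_smul, ← add_assoc] using hv (z + t • v)
  have hline_bound : ∀ t : ℂ,
      ‖f (z + t • v)‖ ≤ C * Real.exp (τ * ‖z‖) * Real.exp (τ * ‖v‖ * ‖t‖) := fun t => by
    have hC : 0 ≤ C := by simpa using (norm_nonneg _).trans (hbound 0)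
    rw [mul_assoc, ← Real.exp_add]
    refine (hbound _).trans (mul_le_mul_of_nonneg_left (Real.exp_le_exp.2 ?_) hC)
    calc τ * ‖z + t • v‖ ≤ τ * (‖z‖ + ‖t‖ * ‖v‖) := by
          gcongr
          exact (norm_add_le _ _).trans_eq (by rw [norm_smul])
      _ = τ * ‖z‖ + τ * ‖v‖ * ‖t‖ := by ring
  simpa using hline.eq_const_of_norm_le_exp one_pos
    (hf.comp ((differentiable_id.smul_const v).const_add z)) (by positivity)
    (by rwa [mul_one]) hline_bound c

theorem smul_of_forall_norm_le_exp (hf : Differentiable ℂ f)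
    (hgrowth : ∀ ε : ℝ, 0 < ε → ∃ C : ℝ, ∀ z, ‖f z‖ ≤ C * Real.exp (ε * ‖z‖))
    {v : E} (hv : Periodic f v) (c : ℂ) : Periodic f (c • v) := by
  have hε : 0 < 1 / (‖v‖ + 1) := by positivity
  obtain ⟨C, hC⟩ := hgrowth _ hε
  refine smul_of_norm_le_exp hf hε.le hC hv ?_ c
  calc 1 / (‖v‖ + 1) * ‖v‖ < 1 := by
        rw [div_mul_eq_mul_div, one_mul, div_lt_one (by positivity)]
        linarith
    _ < 2 * π := by linarith [Real.pi_gt_three]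

theorem of_mem_span (hf : Differentiable ℂ f)
    (hgrowth : ∀ ε : ℝ, 0 < ε → ∃ C : ℝ, ∀ z, ‖f z‖ ≤ C * Real.exp (ε * ‖z‖))
    {s : Set E} (hs : ∀ v ∈ s, Periodic f v) {v : E} (hv : v ∈ Submodule.span ℂ s) :
    Periodic f v :=
  Submodule.span_induction hs (fun z => by rw [add_zero]) (fun _ _ _ _ => add_period)
    (fun c _ _ h => smul_of_forall_norm_le_exp hf hgrowth h c) hv

end Function.Periodic

/-- Liouville-type theorem: an entire function on ℂⁿ of arbitrarily small
exponential type which is invariant under an additive subgroup `H` whose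
ℂ-linear span is all of ℂⁿ is constant. -/
theorem invariant_small_exponential_type_constant
    (n : ℕ) (H : AddSubgroup (EuclideanSpace ℂ (Fin n)))
    (hspan : Submodule.span ℂ (H : Set (EuclideanSpace ℂ (Fin n))) = ⊤)
    (f : EuclideanSpace ℂ (Fin n) → ℂ) (hf : Differentiable ℂ f)
    (hgrowth : ∀ ε : ℝ, 0 < ε → ∃ c : ℝ, 0 < c ∧
      ∀ z : EuclideanSpace ℂ (Fin n), ‖f z‖ ≤ c * Real.exp (ε * ‖z‖))
    (hinv : ∀ z : EuclideanSpace ℂ (Fin n), ∀ h ∈ H, f (z + h) = f z) :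
    ∀ z : EuclideanSpace ℂ (Fin n), f z = f 0 := by
  intro z
  have hz : Periodic f z :=
    Periodic.of_mem_span hf (fun ε hε => (hgrowth ε hε).imp fun _ hc => hc.2)
      (fun v hv w => hinv w v hv) (hspan ▸ Submodule.mem_top)
  simpa using hz 0
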